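/- If A is a formally smooth associative k-algebra, then A is hereditary: every left A-module has projective dimension at most 1. -/

import Mathlib

/-!
STATEMENT 12: if `A` is a formally smooth associative `k`-algebra (i.e. the kernel `Ω¹_A`
of the multiplication `A ⊗_k A → A` is projective as an `A`-bimodule, that is, as a
module over `A^e = A ⊗_k Aᵐᵒᵖ`), then `A` is hereditary: every left `A`-module has
projective dimension at most `1`.
-/

open CategoryTheory
open scoped TensorProduct

set_option synthInstance.maxHeartbeats 400000
set_option maxHeartbeats 1000000

/-- `M` has projective dimension `≤ n`. -/
def ProjDimLE (A : Type) [Ring A] (M : ModuleCat.{0} A) (n : ℕ) : Prop :=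
  ∃ P : ProjectiveResolution M, ∀ i : ℕ, n < i → Limits.IsZero (P.complex.X i)

section

variable (k A : Type) [Field k] [Ring A] [Algebra k A]

/-- The bimodule structure on `A`: `A` is a module over `A^e = A ⊗[k] Aᵐᵒᵖ`,
via `(a ⊗ bᵒᵖ) • x = a * x * b`. -/
noncomputable local instance : Module (A ⊗[k] Aᵐᵒᵖ) A := TensorProduct.Algebra.module

/-- The multiplication map `A^e → A`, `a ⊗ bᵒᵖ ↦ a * b`, as a map of `A^e`-modules;
its kernel is `Ω¹_A`. -/
noncomputable def mulMap : (A ⊗[k] Aᵐᵒᵖ) →ₗ[A ⊗[k] Aᵐᵒᵖ] A :=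
  LinearMap.toSpanSingleton _ _ (1 : A)

/-!
For a left `A`-module `M`, the action map `ε : A ⊗[k] M → M` is a surjection from a free
`A`-module, so it suffices to show that `K = ker ε` is projective. Morally `K ≅ Ω¹_A ⊗_A M`,
which is projective since `Ω¹_A` is a projective bimodule. Avoiding tensor products over the
noncommutative ring `A`, we verify the lifting property directly: for an `A`-linear surjection
`g : E → K`, post-composition with `g` is a surjection of bimodules `Hom_k(M, E) → Hom_k(M, K)`
(as `M` is `k`-projective), through which the bimodule map `Ω¹_A → Hom_k(M, K)`,
`ω ↦ (m ↦ ω ⊗ m)`, lifts to some `h`. Then `a ⊗ m ↦ h (a ⊗ 1 - 1 ⊗ a) m` restricts on `K` to an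
`A`-linear section of `g`: the Leibniz rule for `a ↦ a ⊗ 1 - 1 ⊗ a` makes it `A`-linear on `K`,
and composed with `g` it is `x ↦ x - 1 ⊗ ε x`.
-/

open Limits ZeroObject

namespace CategoryTheory.ShortComplex

section

variable {C : Type*} [Category C] [HasZeroMorphisms C] [HasZeroObject C] (S : ShortComplex C)

noncomputable def twoTermComplex : ChainComplex C ℕ :=
  ChainComplex.of (fun | 0 => S.X₂ | 1 => S.X₁ | _ + 2 => 0)
    (fun | 0 => S.f | _ + 1 => 0) (fun | 0 => zero_comp | _ + 1 => zero_comp)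

lemma twoTermComplex_d_one_zero : S.twoTermComplex.d 1 0 = S.f := by
  simp [twoTermComplex, ChainComplex.of.d]

lemma isZero_twoTermComplex_X (n : ℕ) : IsZero (S.twoTermComplex.X (n + 2)) :=
  isZero_zero C

end

noncomputable def ShortExact.projectiveResolution {C : Type*} [Category C] [Abelian C]
    {S : ShortComplex C} (hS : S.ShortExact) [Projective S.X₁] [Projective S.X₂] :
    ProjectiveResolution S.X₃ where
  complex := S.twoTermComplex
  projective
    | 0 => inferInstanceAs (Projective S.X₂)
    | 1 => inferInstanceAs (Projective S.X₁)
    | n + 2 => (S.isZero_twoTermComplex_X n).projective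
  π := (ChainComplex.toSingle₀Equiv _ _).symm ⟨S.g, by rw [twoTermComplex_d_one_zero]; exact S.zero⟩
  quasiIso := ⟨fun n => by
    cases n with
    | zero =>
      rw [ChainComplex.quasiIsoAt₀_iff, ShortComplex.quasiIso_iff_of_zeros']
      · refine (ShortComplex.exact_and_epi_g_iff_of_iso ?_).2 ⟨hS.exact, hS.epi_g⟩
        refine ShortComplex.isoMk (Iso.refl _) (Iso.refl _) (Iso.refl _) ?_ ?_ <;>
          dsimp <;> erw [Category.id_comp, Category.comp_id]
        · exact (twoTermComplex_d_one_zero S).symm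
        · exact (ChainComplex.toSingle₀Equiv_symm_apply_f_zero (C := S.twoTermComplex) _ _).symm
      all_goals rfl
    | succ n =>
      rw [quasiIsoAt_iff_exactAt' _ _ (ChainComplex.exactAt_succ_single_obj _ _),
        HomologicalComplex.exactAt_iff' _ (n + 2) (n + 1) n (by simp) (by simp)]
      match n with
      | 0 =>
        rw [ShortComplex.exact_iff_mono _ ((S.isZero_twoTermComplex_X 0).eq_of_src _ _)]
        change Mono (S.twoTermComplex.d 1 0)
        rw [twoTermComplex_d_one_zero]
        exact hS.mono_f
      | n + 1 => exact ShortComplex.exact_of_isZero_X₂ _ (S.isZero_twoTermComplex_X n)⟩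

end CategoryTheory.ShortComplex

theorem projDimLE_one_of_shortExact {R : Type} [Ring R] {S : ShortComplex (ModuleCat.{0} R)}
    (hS : S.ShortExact) [Projective S.X₁] [Projective S.X₂] : ProjDimLE R S.X₃ 1 :=
  ⟨hS.projectiveResolution, fun | n + 2, _ => S.isZero_twoTermComplex_X n⟩

section Bimodule

variable {R S : Type*} [CommSemiring R] [Semiring S] [Algebra R S]

def AddMonoidHom.toLinearMapOfTmul {X Y : Type*} [AddCommMonoid X] [AddCommMonoid Y]
    [Module (S ⊗[R] Sᵐᵒᵖ) X] [Module (S ⊗[R] Sᵐᵒᵖ) Y] (f : X →+ Y)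
    (hf : ∀ (a : S) (b : Sᵐᵒᵖ) (x : X), f ((a ⊗ₜ[R] b) • x) = (a ⊗ₜ[R] b) • f x) :
    X →ₗ[S ⊗[R] Sᵐᵒᵖ] Y where
  __ := f
  map_smul' c x := by
    change f (c • x) = c • f x
    induction c using TensorProduct.induction_on with
    | zero =>
      exact (congrArg f (zero_smul (S ⊗[R] Sᵐᵒᵖ) x)).trans
        (f.map_zero.trans (zero_smul (S ⊗[R] Sᵐᵒᵖ) (f x)).symm)
    | tmul a b => exact hf a b x
    | add c c' hc hc' => simp_all [add_smul]

/- `Sᵐᵒᵖ` acts on `M →ₗ[R] E` by precomposition, through the action of the type synonym `Sᵈᵐᵃ`;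
with postcomposition this makes `M →ₗ[R] E` an `S`-bimodule. The instances are local because
when `E` is itself a right `S`-module, `M →ₗ[R] E` carries a second `Sᵐᵒᵖ`-action. -/
noncomputable local instance {M E : Type*} [AddCommMonoid M] [Module R M] [Module S M]
    [IsScalarTower R S M] [AddCommMonoid E] [Module R E] : Module Sᵐᵒᵖ (M →ₗ[R] E) :=
  inferInstanceAs (Module Sᵈᵐᵃ (M →ₗ[R] E))

local instance {M E : Type*} [AddCommMonoid M] [Module R M] [Module S M] [IsScalarTower R S M]
    [AddCommMonoid E] [Module R E] [Module S E] [IsScalarTower R S E] :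
    SMulCommClass S Sᵐᵒᵖ (M →ₗ[R] E) :=
  ⟨fun _ _ _ => rfl⟩

local instance {M E : Type*} [AddCommMonoid M] [Module R M] [Module S M] [IsScalarTower R S M]
    [AddCommMonoid E] [Module R E] : IsScalarTower R Sᵐᵒᵖ (M →ₗ[R] E) :=
  ⟨fun c b φ => LinearMap.ext fun m => by
    change φ ((c • b).unop • m) = c • φ (b.unop • m)
    rw [MulOpposite.unop_smul, smul_assoc, map_smul]⟩

noncomputable local instance {M E : Type*} [AddCommMonoid M] [Module R M] [Module S M]
    [IsScalarTower R S M] [AddCommMonoid E] [Module R E] [Module S E] [IsScalarTower R S E] :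
    Module (S ⊗[R] Sᵐᵒᵖ) (M →ₗ[R] E) :=
  TensorProduct.Algebra.module

local instance {M E : Type*} [AddCommMonoid M] [Module R M] [Module S M] [IsScalarTower R S M]
    [AddCommMonoid E] [Module R E] [Module S E] [IsScalarTower R S E] :
    IsScalarTower R (S ⊗[R] Sᵐᵒᵖ) (M →ₗ[R] E) :=
  ⟨fun c x φ => by
    change TensorProduct.Algebra.moduleAux (c • x) φ = c • TensorProduct.Algebra.moduleAux x φ
    simp⟩

section General

variable {M E F : Type*} [AddCommMonoid M] [Module R M] [Module S M] [IsScalarTower R S M]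
  [AddCommMonoid E] [Module R E] [Module S E] [IsScalarTower R S E]
  [AddCommMonoid F] [Module R F] [Module S F] [IsScalarTower R S F]

theorem tmul_smul_linearMap_apply (a : S) (b : Sᵐᵒᵖ) (φ : M →ₗ[R] E) (m : M) :
    ((a ⊗ₜ[R] b) • φ) m = a • φ (b.unop • m) := rfl

variable (R M) in
noncomputable def postcomp (g : E →ₗ[S] F) : (M →ₗ[R] E) →ₗ[S ⊗[R] Sᵐᵒᵖ] (M →ₗ[R] F) :=
  AddMonoidHom.toLinearMapOfTmul
    (LinearMap.compRight (M := M) R (g.restrictScalars R)).toAddMonoidHom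
    fun a b φ => LinearMap.ext fun m => g.map_smul a (φ (b.unop • m))

theorem postcomp_surjective [Module.Projective R M] {g : E →ₗ[S] F}
    (hg : Function.Surjective g) : Function.Surjective (postcomp R M g) :=
  fun ψ => Module.projective_lifting_property (g.restrictScalars R) ψ hg

variable (R S M) in
noncomputable def actionMap : S ⊗[R] M →ₗ[S] M :=
  TensorProduct.AlgebraTensorModule.lift (LinearMap.toSpanSingleton S (M →ₗ[R] M) LinearMap.id)

@[simp] theorem actionMap_tmul (a : S) (m : M) : actionMap R S M (a ⊗ₜ m) = a • m := rfl

theorem actionMap_surjective : Function.Surjective (actionMap R S M) :=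
  fun m => ⟨1 ⊗ₜ m, one_smul S m⟩

variable (R S M) in
/-- `(x, m) ↦ x ⊗ m` under `(S ⊗[R] Sᵐᵒᵖ) ⊗_S M ≅ S ⊗[R] M`. -/
noncomputable def tensorSMul : S ⊗[R] Sᵐᵒᵖ →ₗ[R] M →ₗ[R] S ⊗[R] M :=
  TensorProduct.lift <| ((LinearMap.llcomp R M M (S ⊗[R] M)) ∘ₗ TensorProduct.mk R S M).compl₂
    ((Algebra.lsmul R R M).toLinearMap ∘ₗ (MulOpposite.opLinearEquiv R).symm.toLinearMap)

@[simp] theorem tensorSMul_tmul (a : S) (b : Sᵐᵒᵖ) (m : M) :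
    tensorSMul R S M (a ⊗ₜ b) m = a ⊗ₜ (b.unop • m) := rfl

theorem tensorSMul_tmul_mul (a : S) (b : Sᵐᵒᵖ) (x : S ⊗[R] Sᵐᵒᵖ) (m : M) :
    tensorSMul R S M ((a ⊗ₜ b) * x) m = a • tensorSMul R S M x (b.unop • m) := by
  induction x using TensorProduct.induction_on with
  | zero => simp
  | tmul u v => simp [Algebra.TensorProduct.tmul_mul_tmul, mul_smul, TensorProduct.smul_tmul']
  | add x y hx hy => simp only [mul_add, map_add, LinearMap.add_apply, hx, hy, smul_add]

end General

section FormallySmooth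

variable {k A}

theorem mulMap_tmul (a : A) (b : Aᵐᵒᵖ) : mulMap k A (a ⊗ₜ b) = a * b.unop := by
  change (a ⊗ₜ[k] b) • (1 : A) = _
  rw [TensorProduct.Algebra.smul_def, MulOpposite.smul_eq_mul_unop, one_mul, smul_eq_mul]

variable {M E : Type*} [AddCommGroup M] [Module k M] [Module A M] [IsScalarTower k A M]
  [AddCommMonoid E] [Module k E] [Module A E] [IsScalarTower k A E]

theorem actionMap_tensorSMul (x : A ⊗[k] Aᵐᵒᵖ) (m : M) :
    actionMap k A M (tensorSMul k A M x m) = mulMap k A x • m := by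
  induction x using TensorProduct.induction_on with
  | zero => simp
  | tmul a b => simp [mulMap_tmul, mul_smul]
  | add x y hx hy => simp [hx, hy, add_smul]

variable (M) in
noncomputable def omegaTensor :
    LinearMap.ker (mulMap k A) →ₗ[A ⊗[k] Aᵐᵒᵖ] (M →ₗ[k] LinearMap.ker (actionMap k A M)) :=
  AddMonoidHom.toLinearMapOfTmul
    { toFun ω :=
        { toFun m := ⟨tensorSMul k A M ω m, by
            rw [LinearMap.mem_ker, actionMap_tensorSMul, LinearMap.mem_ker.mp ω.2, zero_smul]⟩
          map_add' m m' := by ext; simp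
          map_smul' c m := by ext; simp }
      map_zero' := by ext; simp
      map_add' ω ω' := by ext; simp }
    fun a b ω => by ext m; simp [tensorSMul_tmul_mul, tmul_smul_linearMap_apply]

variable (k A) in
noncomputable def dOmega : A →ₗ[k] LinearMap.ker (mulMap k A) where
  toFun a := ⟨a ⊗ₜ 1 - 1 ⊗ₜ MulOpposite.op a, by simp [mulMap_tmul]⟩
  map_add' a b := by ext; simp [TensorProduct.add_tmul, TensorProduct.tmul_add]; abel
  map_smul' c a := by ext; simp [TensorProduct.smul_tmul', TensorProduct.tmul_smul, smul_sub]

theorem coe_dOmega (a : A) :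
    (dOmega k A a : A ⊗[k] Aᵐᵒᵖ) = a ⊗ₜ 1 - 1 ⊗ₜ MulOpposite.op a := rfl

theorem dOmega_mul (a b : A) :
    dOmega k A (a * b) =
      (a ⊗ₜ[k] (1 : Aᵐᵒᵖ)) • dOmega k A b + ((1 : A) ⊗ₜ[k] MulOpposite.op b) • dOmega k A a := by
  ext
  simp only [coe_dOmega, Submodule.coe_add, Submodule.coe_smul, smul_eq_mul, mul_sub,
    Algebra.TensorProduct.tmul_mul_tmul, mul_one, one_mul, MulOpposite.op_mul]
  abel

variable (M) in
noncomputable def uncurryD (h : LinearMap.ker (mulMap k A) →ₗ[A ⊗[k] Aᵐᵒᵖ] (M →ₗ[k] E)) :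
    A ⊗[k] M →ₗ[k] E :=
  TensorProduct.lift ((h.restrictScalars k) ∘ₗ dOmega k A)

@[simp] theorem uncurryD_tmul (h : LinearMap.ker (mulMap k A) →ₗ[A ⊗[k] Aᵐᵒᵖ] (M →ₗ[k] E))
    (a : A) (m : M) : uncurryD M h (a ⊗ₜ m) = h (dOmega k A a) m := rfl

theorem uncurryD_smul (h : LinearMap.ker (mulMap k A) →ₗ[A ⊗[k] Aᵐᵒᵖ] (M →ₗ[k] E))
    (a : A) (x : A ⊗[k] M) :
    uncurryD M h (a • x) = a • uncurryD M h x + h (dOmega k A a) (actionMap k A M x) := by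
  induction x using TensorProduct.induction_on with
  | zero => simp
  | tmul b m => simp [TensorProduct.smul_tmul', dOmega_mul, tmul_smul_linearMap_apply]
  | add x y hx hy => simp only [smul_add, map_add, hx, hy]; abel

theorem coe_uncurryD {h : LinearMap.ker (mulMap k A) →ₗ[A ⊗[k] Aᵐᵒᵖ] (M →ₗ[k] E)}
    {g : E →ₗ[A] LinearMap.ker (actionMap k A M)} (hh : postcomp k M g ∘ₗ h = omegaTensor M)
    (x : A ⊗[k] M) : (g (uncurryD M h x) : A ⊗[k] M) = x - 1 ⊗ₜ actionMap k A M x := by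
  induction x using TensorProduct.induction_on with
  | zero => simp
  | tmul a m =>
    have hδ : (g (h (dOmega k A a) m) : A ⊗[k] M) = tensorSMul k A M (dOmega k A a) m :=
      congr(($hh (dOmega k A a) m : A ⊗[k] M))
    simp [hδ, coe_dOmega]
  | add x y hx hy => simp only [map_add, Submodule.coe_add, hx, hy, TensorProduct.tmul_add]; abel

theorem exists_section_onto_ker_actionMap
    (hΩ : Module.Projective (A ⊗[k] Aᵐᵒᵖ) (LinearMap.ker (mulMap k A)))
    {g : E →ₗ[A] LinearMap.ker (actionMap k A M)} (hg : Function.Surjective g) :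
    ∃ s, g ∘ₗ s = LinearMap.id := by
  obtain ⟨h, hh⟩ := Module.projective_lifting_property (postcomp k M g) (omegaTensor M)
    (postcomp_surjective hg)
  refine ⟨{ toFun κ := uncurryD M h κ, map_add' κ κ' := by simp, map_smul' a κ := ?_ }, ?_⟩
  · simp [uncurryD_smul, LinearMap.mem_ker.mp κ.2]
  · ext κ
    simp [coe_uncurryD hh, LinearMap.mem_ker.mp κ.2]

variable (M) in
theorem projective_ker_actionMap
    (hΩ : Module.Projective (A ⊗[k] Aᵐᵒᵖ) (LinearMap.ker (mulMap k A))) :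
    Module.Projective A (LinearMap.ker (actionMap k A M)) :=
  .of_lifting_property'' fun _ hg => exists_section_onto_ker_actionMap hΩ hg

end FormallySmooth

end Bimodule

theorem hereditary_of_formallySmooth
    (h : Module.Projective (A ⊗[k] Aᵐᵒᵖ) (LinearMap.ker (mulMap k A))) :
    ∀ M : ModuleCat.{0} A, ProjDimLE A M 1 := by
  intro M
  let : Module k M := Module.compHom M (algebraMap k A)
  have : IsScalarTower k A M := .of_algebraMap_smul fun _ _ => rfl
  have := projective_ker_actionMap M h
  exact projDimLE_one_of_shortExact
    (LinearMap.shortExact_shortComplexKer (actionMap_surjective (R := k)))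

end
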